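/- Let (S; R) be a semigroup presentation, K a field, and I the two-sided ideal of the free (noncommutative) algebra K⟨S⟩ generated by the elements u − v for (u,v) ∈ R. Then for all words w, w' in the free monoid S*, w and w' are congruent modulo the congruence generated by R if and only if w − w' ∈ I (where words are identified with the corresponding monomials in K⟨S⟩). -/

import Mathlib

namespace Stmt14

lemma sub_mul_mem_aux {A : Type*} [Ring A] (I : TwoSidedIdeal A) {a b c d : A}
    (h1 : a - b ∈ I) (h2 : c - d ∈ I) : a * c - b * d ∈ I := by
  have h : a * c - b * d = (a - b) * c + b * (c - d) := by noncomm_ring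
  rw [h]
  exact I.add_mem (I.mul_mem_right _ _ h1) (I.mul_mem_left _ _ h2)

theorem stmt14 (S : Type*) (K : Type*) [Field K]
    (R : FreeMonoid S → FreeMonoid S → Prop)
    (I : TwoSidedIdeal (MonoidAlgebra K (FreeMonoid S)))
    (hI : I = TwoSidedIdeal.span
      {x | ∃ u v : FreeMonoid S, R u v ∧
        x = MonoidAlgebra.of K (FreeMonoid S) u - MonoidAlgebra.of K (FreeMonoid S) v})
    (w w' : FreeMonoid S) :
    conGen R w w' ↔
      MonoidAlgebra.of K (FreeMonoid S) w - MonoidAlgebra.of K (FreeMonoid S) w' ∈ I := by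
  subst hI
  constructor
  · intro h
    induction h with
    | of u v huv => exact TwoSidedIdeal.subset_span ⟨u, v, huv, rfl⟩
    | refl x => simp
    | symm h ih => simpa using TwoSidedIdeal.neg_mem _ ih
    | trans h1 h2 ih1 ih2 => simpa using TwoSidedIdeal.add_mem _ ih1 ih2
    | mul h1 h2 ih1 ih2 =>
      rw [map_mul, map_mul]
      exact sub_mul_mem_aux _ ih1 ih2
  · intro h
    set c := conGen R with hc
    let f : MonoidAlgebra K (FreeMonoid S) →+* MonoidAlgebra K c.Quotient :=
      MonoidAlgebra.mapDomainRingHom K c.mk'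
    have hle : TwoSidedIdeal.span
        {x | ∃ u v : FreeMonoid S, R u v ∧
          x = MonoidAlgebra.of K (FreeMonoid S) u - MonoidAlgebra.of K (FreeMonoid S) v}
        ≤ TwoSidedIdeal.ker f := by
      intro x hx
      refine TwoSidedIdeal.mem_span_iff.mp hx _ ?_
      rintro y ⟨u, v, huv, rfl⟩
      rw [SetLike.mem_coe, TwoSidedIdeal.mem_ker, map_sub, sub_eq_zero]
      show MonoidAlgebra.mapDomain c.mk' (MonoidAlgebra.single u (1 : K))
        = MonoidAlgebra.mapDomain c.mk' (MonoidAlgebra.single v 1)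
      rw [MonoidAlgebra.mapDomain_single, MonoidAlgebra.mapDomain_single]
      exact congrArg (fun m => MonoidAlgebra.single m 1) (c.eq.mpr (hc ▸ ConGen.Rel.of u v huv))
    have hf := (TwoSidedIdeal.mem_ker f).mp (hle h)
    rw [map_sub, sub_eq_zero] at hf
    have hf' : MonoidAlgebra.single (c.mk' w) (1 : K) = MonoidAlgebra.single (c.mk' w') 1 := by
      simpa [f, MonoidAlgebra.mapDomainRingHom_apply, Finsupp.mapDomain_single,
        MonoidAlgebra.of_apply] using hf
    have := (MonoidAlgebra.single_left_injective (one_ne_zero (α := K))).eq_iff.mp hf'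
    exact c.eq.mp this

end Stmt14
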